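/- Let the group GL(2,ℝ) act on the right on homogeneous polynomials of degree k via (V·g)(x,y) = V((x,y)g). Then for every g = [[u,-v],[v,u]] ∈ CO(2) and every natural number i, one has (W_i^even · g, W_i^odd · g) = (W_i^even, W_i^odd) · g^i, i.e. the row vector (W_i^even, W_i^odd) transforms by right multiplication by the i-th power of the matrix g. -/

import Mathlib

open MvPolynomial Finset Complex

/-- `W_i^even(x,y) = Σ_{s=0}^{⌊i/2⌋} (-1)^s C(i,2s) x^{i-2s} y^{2s}`. -/
noncomputable def Weven (R : Type*) [CommRing R] (i : ℕ) : MvPolynomial (Fin 2) R :=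
  ∑ s ∈ Finset.range (i / 2 + 1),
    MvPolynomial.C ((-1 : R) ^ s * (i.choose (2 * s) : R)) *
      (X 0 ^ (i - 2 * s) * X 1 ^ (2 * s))

/-- `W_i^odd(x,y) = Σ_{s=0}^{⌊(i-1)/2⌋} (-1)^s C(i,2s+1) x^{i-2s-1} y^{2s+1}`. -/
noncomputable def Wodd (R : Type*) [CommRing R] (i : ℕ) : MvPolynomial (Fin 2) R :=
  ∑ s ∈ Finset.range ((i - 1) / 2 + 1),
    MvPolynomial.C ((-1 : R) ^ s * (i.choose (2 * s + 1) : R)) *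
      (X 0 ^ (i - (2 * s + 1)) * X 1 ^ (2 * s + 1))

/-- The right `GL(2)` action `(V·g)(x,y) = V((x,y)g)`: variable `j` is sent to
`g 0 j • x + g 1 j • y`. -/
noncomputable def act {R : Type*} [CommRing R] (g : Matrix (Fin 2) (Fin 2) R)
    (V : MvPolynomial (Fin 2) R) : MvPolynomial (Fin 2) R :=
  MvPolynomial.aeval (fun j => MvPolynomial.C (g 0 j) * X 0 + MvPolynomial.C (g 1 j) * X 1) V

lemma sum_range_even_odd {M : Type*} [AddCommMonoid M] (g : ℕ → M) (n : ℕ) :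
    ∑ k ∈ Finset.range n, g k
      = (∑ s ∈ Finset.range ((n+1)/2), g (2*s)) + ∑ s ∈ Finset.range (n/2), g (2*s+1) := by
  induction n with
  | zero => simp
  | succ n ih =>
    rw [Finset.sum_range_succ, ih]
    rcases Nat.even_or_odd n with ⟨t, ht⟩ | ⟨t, ht⟩
    · subst ht
      simp only [show (t+t+1+1)/2 = t+1 by omega, show (t+t+1)/2 = t by omega,
        show (t+t)/2 = t by omega]
      rw [Finset.sum_range_succ]
      simp only [show 2*t = t+t by omega]
      abel
    · subst ht
      simp only [show (2*t+1+1+1)/2 = t+1 by omega, show (2*t+1+1)/2 = t+1 by omega,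
        show (2*t+1)/2 = t by omega]
      conv_rhs => rw [Finset.sum_range_succ (f := fun s => g (2*s+1))]
      abel

lemma weven_zero : Weven ℝ 0 = 1 := by
  simp [Weven]

lemma wodd_zero : Wodd ℝ 0 = 0 := by
  simp [Wodd]

lemma w_expand (i : ℕ) :
    (X 0 + C I * X 1 : MvPolynomial (Fin 2) ℂ) ^ i
      = map (algebraMap ℝ ℂ) (Weven ℝ i) + C I * map (algebraMap ℝ ℂ) (Wodd ℝ i) := by
  cases i with
  | zero => simp [weven_zero, wodd_zero]
  | succ j =>
    set i := j + 1 with hi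
    rw [add_comm (X 0 : MvPolynomial (Fin 2) ℂ), add_pow,
      sum_range_even_odd (fun k => (C I * X 1)^k * (X 0)^(i-k) * (i.choose k : MvPolynomial (Fin 2) ℂ))]
    have hr1 : (i + 1 + 1) / 2 = i / 2 + 1 := by omega
    have hr2 : (i + 1) / 2 = (i - 1) / 2 + 1 := by omega
    rw [hr1, hr2]
    congr 1
    · rw [Weven, map_sum]
      refine Finset.sum_congr rfl fun s hs => ?_
      have h2s : 2 * s ≤ i := by
        have := Finset.mem_range.mp hs; omega
      rw [mul_pow, ← C_pow, pow_mul I, I_sq]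
      simp only [map_mul, map_pow, map_C, map_X, map_natCast]
      push_cast
      ring_nf
    · rw [Wodd, map_sum, Finset.mul_sum]
      refine Finset.sum_congr rfl fun s hs => ?_
      have h2s : 2 * s + 1 ≤ i := by
        have := Finset.mem_range.mp hs; omega
      rw [mul_pow, ← C_pow, pow_succ, pow_mul I, I_sq]
      simp only [map_mul, map_pow, map_C, map_X, map_natCast]
      push_cast
      ring_nf



lemma map_act (g : Matrix (Fin 2) (Fin 2) ℝ) (V : MvPolynomial (Fin 2) ℝ) :
    map (algebraMap ℝ ℂ) (act g V)
      = act (g.map (algebraMap ℝ ℂ)) (map (algebraMap ℝ ℂ) V) := by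
  induction V using MvPolynomial.induction_on with
  | C a => simp [act]
  | add p q hp hq => simp only [act, map_add] at hp hq ⊢; rw [hp, hq]
  | mul_X p j hp =>
    simp only [act, map_mul, map_X, aeval_X, map_add, map_C, Matrix.map_apply] at hp ⊢
    rw [hp]

lemma pow_entries (u v : ℝ) (i : ℕ) :
    (!![u, -v; v, u] : Matrix (Fin 2) (Fin 2) ℝ) ^ i
      = !![((u + v*I)^i).re, -(((u + v*I)^i).im); ((u + v*I)^i).im, ((u + v*I)^i).re] := by
  induction i with
  | zero => simp [Matrix.one_fin_two]
  | succ n ih =>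
    rw [pow_succ, ih, pow_succ]
    ext a b
    fin_cases a <;> fin_cases b <;>
      simp [Matrix.mul_apply, Fin.sum_univ_two, Complex.mul_re, Complex.mul_im,
        Complex.add_re, Complex.add_im, Complex.ofReal_re, Complex.ofReal_im,
        Complex.mul_I_re, Complex.mul_I_im] <;> ring

lemma re_im_cancel {P1 P2 Q1 Q2 : MvPolynomial (Fin 2) ℝ}
    (h : map (algebraMap ℝ ℂ) P1 + C I * map (algebraMap ℝ ℂ) P2
        = map (algebraMap ℝ ℂ) Q1 + C I * map (algebraMap ℝ ℂ) Q2) :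
    P1 = Q1 ∧ P2 = Q2 := by
  have key : ∀ m : Fin 2 →₀ ℕ, coeff m P1 = coeff m Q1 ∧ coeff m P2 = coeff m Q2 := by
    intro m
    have h2 := congrArg (coeff m) h
    simp only [coeff_add, coeff_C_mul, coeff_map] at h2
    have hre := congrArg Complex.re h2
    have him := congrArg Complex.im h2
    simp [Complex.add_re, Complex.add_im, Complex.mul_re, Complex.mul_im] at hre him
    exact ⟨hre, him⟩
  exact ⟨MvPolynomial.ext _ _ fun m => (key m).1, MvPolynomial.ext _ _ fun m => (key m).2⟩

/-- for `g ∈ CO(2)`, the row vector `(W_i^even, W_i^odd)` transforms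
under the right action of `g` by right multiplication by the matrix `g^i`. -/
theorem co2_action_on_w (u v : ℝ) (huv : u ^ 2 + v ^ 2 ≠ 0) (i : ℕ) :
    act !![u, -v; v, u] (Weven ℝ i)
        = MvPolynomial.C ((!![u, -v; v, u] ^ i) 0 0) * Weven ℝ i
          + MvPolynomial.C ((!![u, -v; v, u] ^ i) 1 0) * Wodd ℝ i ∧
    act !![u, -v; v, u] (Wodd ℝ i)
        = MvPolynomial.C ((!![u, -v; v, u] ^ i) 0 1) * Weven ℝ i
          + MvPolynomial.C ((!![u, -v; v, u] ^ i) 1 1) * Wodd ℝ i := by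
  classical
  set w : ℂ := (↑u + ↑v * I) ^ i with hw
  set p : ℝ := w.re
  set q : ℝ := w.im
  have hpow : (!![u, -v; v, u] : Matrix (Fin 2) (Fin 2) ℝ) ^ i = !![p, -q; q, p] :=
    pow_entries u v i
  set E := Weven ℝ i
  set O := Wodd ℝ i
  set gc : Matrix (Fin 2) (Fin 2) ℂ := (!![u, -v; v, u] : Matrix (Fin 2) (Fin 2) ℝ).map (algebraMap ℝ ℂ)
    with hgc
  have hgc' : gc = !![(u:ℂ), -v; v, u] := by
    ext a b; fin_cases a <;> fin_cases b <;> simp [hgc, Complex.coe_algebraMap]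
  -- the act of gc on Z
  set Z : MvPolynomial (Fin 2) ℂ := X 0 + C I * X 1 with hZ
  have hI : (C I : MvPolynomial (Fin 2) ℂ) * C I = -1 := by
    rw [← C_mul, Complex.I_mul_I, map_neg, map_one]
  have hactZ : act gc Z = C (↑u - ↑v * I) * Z := by
    rw [hZ, hgc']
    have e00 : (!![(u:ℂ), -v; v, u]) 0 0 = u := rfl
    have e01 : (!![(u:ℂ), -v; v, u]) 0 1 = -v := rfl
    have e10 : (!![(u:ℂ), -v; v, u]) 1 0 = v := rfl
    have e11 : (!![(u:ℂ), -v; v, u]) 1 1 = u := rfl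
    simp only [act, map_add, map_mul, aeval_X, aeval_C, algebraMap_eq,
      e00, e01, e10, e11, map_sub, map_neg]
    linear_combination (C (↑v:ℂ) * X 1) * hI
  have hactpow : act gc (Z ^ i) = C ((↑u - ↑v * I) ^ i) * Z ^ i := by
    simp only [act, map_pow] at hactZ ⊢
    rw [hactZ, mul_pow, ← C_pow]
  have hconj : ((u:ℂ) - ↑v * I) ^ i = ↑p - ↑q * I := by
    have h1 : ((u:ℂ) - ↑v * I) = (starRingEnd ℂ) (↑u + ↑v * I) := by
      simp [Complex.ext_iff]
    rw [h1, ← map_pow, ← hw]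
    simp [Complex.ext_iff]
    exact ⟨rfl, rfl⟩
  have key : map (algebraMap ℝ ℂ) (act !![u, -v; v, u] E) + C I * map (algebraMap ℝ ℂ) (act !![u, -v; v, u] O)
      = map (algebraMap ℝ ℂ) (C p * E + C q * O) + C I * map (algebraMap ℝ ℂ) (C (-q) * E + C p * O) := by
    have h1 : map (algebraMap ℝ ℂ) (act !![u, -v; v, u] E) + C I * map (algebraMap ℝ ℂ) (act !![u, -v; v, u] O)
        = act gc (map (algebraMap ℝ ℂ) E + C I * map (algebraMap ℝ ℂ) O) := by
      rw [map_act, map_act]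
      simp only [act, map_add, map_mul, aeval_C]
      rw [algebraMap_eq]
    rw [h1, ← w_expand i, hactpow, hconj, w_expand i]
    simp only [map_sub, map_mul, map_add, map_neg, map_C, Complex.coe_algebraMap]
    linear_combination (-(C (q:ℂ) * map (algebraMap ℝ ℂ) O)) * hI
  have := re_im_cancel key
  rw [hpow]
  constructor
  · rw [this.1]; norm_num
  · rw [this.2]; norm_num
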